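/- The real vector space 𝕆 with scalar multiplication p ⋆ m := p̄·m (octonionic multiplication by the conjugate) is a left 𝕆-module, i.e., 1 ⋆ m = m and (pq) ⋆ m - p ⋆ (q ⋆ m) = -((qp) ⋆ m - q ⋆ (p ⋆ m)) for all p, q, m ∈ 𝕆. -/

import Mathlib

noncomputable section

open Quaternion

/-- The octonions, via the Cayley–Dickson construction on the quaternions. -/
def Octonion : Type := ℍ[ℝ] × ℍ[ℝ]

namespace Octonion

instance : AddCommGroup Octonion := inferInstanceAs (AddCommGroup (ℍ[ℝ] × ℍ[ℝ]))
instance : Module ℝ Octonion := inferInstanceAs (Module ℝ (ℍ[ℝ] × ℍ[ℝ]))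

instance : One Octonion := ⟨((1 : ℍ[ℝ]), (0 : ℍ[ℝ]))⟩
instance : Mul Octonion :=
  ⟨fun x y => (x.1 * y.1 - star y.2 * x.2, y.2 * x.1 + x.2 * star y.1)⟩
/-- Octonionic conjugation. -/
instance : Star Octonion := ⟨fun x => (star x.1, -x.2)⟩

/-- The associator `[a,b,c] = (ab)c - a(bc)`. -/
def assoc (a b c : Octonion) : Octonion := a * b * c - a * (b * c)

/-- The standard imaginary units `e 0 = e₁, …, e 6 = e₇`. -/
def e : Fin 7 → Octonion
  | 0 => ((⟨0,1,0,0⟩ : ℍ[ℝ]), 0)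
  | 1 => ((⟨0,0,1,0⟩ : ℍ[ℝ]), 0)
  | 2 => ((⟨0,0,0,1⟩ : ℍ[ℝ]), 0)
  | 3 => (0, (1 : ℍ[ℝ]))
  | 4 => (0, (⟨0,1,0,0⟩ : ℍ[ℝ]))
  | 5 => (0, (⟨0,0,1,0⟩ : ℍ[ℝ]))
  | 6 => (0, (⟨0,0,0,1⟩ : ℍ[ℝ]))

end Octonion

/-- A left `𝕆`-module: a real vector space with an `ℝ`-bilinear octonion action
satisfying `1 • m = m` and the alternating rule. -/
structure LeftOModule (M : Type) [AddCommGroup M] [Module ℝ M] where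
  smul : Octonion →ₗ[ℝ] M →ₗ[ℝ] M
  one_smul : ∀ m : M, smul 1 m = m
  alt : ∀ (p q : Octonion) (m : M),
    smul (p * q) m - smul p (smul q m) = -(smul (q * p) m - smul q (smul p m))

/-- An `𝕆`-bimodule: compatible left and right `𝕆`-module structures with
`[p,q,m] = [q,m,p] = [m,p,q]`.  Here `l p m` is `p * m` and `r p m` is `m * p`. -/
structure OBimodule (M : Type) [AddCommGroup M] [Module ℝ M] where
  l : Octonion →ₗ[ℝ] M →ₗ[ℝ] M
  r : Octonion →ₗ[ℝ] M →ₗ[ℝ] M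
  one_l : ∀ m : M, l 1 m = m
  one_r : ∀ m : M, r 1 m = m
  /-- left alternating rule `[p,q,m] = -[q,p,m]` -/
  alt_l : ∀ (p q : Octonion) (m : M),
    l (p * q) m - l p (l q m) = -(l (q * p) m - l q (l p m))
  /-- right alternating rule `[m,p,q] = -[m,q,p]` -/
  alt_r : ∀ (p q : Octonion) (m : M),
    r q (r p m) - r (p * q) m = -(r p (r q m) - r (q * p) m)
  /-- `[p,q,m] = [q,m,p]` -/
  comp_lm : ∀ (p q : Octonion) (m : M),
    l (p * q) m - l p (l q m) = r p (l q m) - l q (r p m)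
  /-- `[p,q,m] = [m,p,q]` -/
  comp_rm : ∀ (p q : Octonion) (m : M),
    l (p * q) m - l p (l q m) = r q (r p m) - r (p * q) m

/-! Conjugation reverses products, so the alternating rule for `p ⋆ m = p̄ m` reads
`[q̄, p̄, m] + [p̄, q̄, m] = 0`: the linearised left alternative law `(aa)m = a(am)` of `𝕆`.
That law holds in the Cayley–Dickson double of `ℍ` because `x + x̄` and `x̄ x` are real,
hence central, in `ℍ`. -/

theorem Quaternion.commute_self_add_star {R : Type*} [CommRing R] (x z : ℍ[R]) :
    Commute (x + star x) z := by
  rw [Quaternion.self_add_star']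
  exact Quaternion.coe_commute _ _

theorem Quaternion.commute_star_mul_self {R : Type*} [CommRing R] (y z : ℍ[R]) :
    Commute (star y * y) z := by
  rw [Quaternion.star_mul_eq_coe]
  exact Quaternion.coe_commute _ _

namespace Octonion

@[ext] theorem ext {x y : Octonion} (h₁ : x.1 = y.1) (h₂ : x.2 = y.2) : x = y := Prod.ext h₁ h₂

@[simp] theorem fst_one : (1 : Octonion).1 = 1 := rfl
@[simp] theorem snd_one : (1 : Octonion).2 = 0 := rfl
@[simp] theorem fst_add (x y : Octonion) : (x + y).1 = x.1 + y.1 := rfl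
@[simp] theorem snd_add (x y : Octonion) : (x + y).2 = x.2 + y.2 := rfl
@[simp] theorem fst_mul (x y : Octonion) : (x * y).1 = x.1 * y.1 - star y.2 * x.2 := rfl
@[simp] theorem snd_mul (x y : Octonion) : (x * y).2 = y.2 * x.1 + x.2 * star y.1 := rfl
@[simp] theorem fst_star (x : Octonion) : (star x).1 = star x.1 := rfl
@[simp] theorem snd_star (x : Octonion) : (star x).2 = -x.2 := rfl

@[simp] protected theorem star_one : star (1 : Octonion) = 1 := by
  ext : 1 <;> simp

@[simp] protected theorem one_mul (x : Octonion) : 1 * x = x := by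
  ext : 1 <;> simp

protected theorem mul_add (x y z : Octonion) : x * (y + z) = x * y + x * z := by
  ext : 1 <;> simp only [fst_mul, snd_mul, fst_add, snd_add, star_add] <;> noncomm_ring

protected theorem add_mul (x y z : Octonion) : (x + y) * z = x * z + y * z := by
  ext : 1 <;> simp only [fst_mul, snd_mul, fst_add, snd_add] <;> noncomm_ring

protected theorem star_mul (x y : Octonion) : star (x * y) = star y * star x := by
  ext : 1 <;> simp only [fst_mul, snd_mul, fst_star, snd_star, star_sub, star_mul, star_star,
    star_neg] <;> noncomm_ring

theorem mul_self_mul (a m : Octonion) : a * a * m = a * (a * m) := by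
  obtain ⟨x, y⟩ := a
  obtain ⟨u, v⟩ := m
  have hx := Quaternion.commute_self_add_star x
  have hy := Quaternion.commute_star_mul_self y
  ext : 1
  · calc (x * x - star y * y) * u - star v * (y * x + y * star x)
        = x * x * u - (star y * y) * u - (star v * y) * (x + star x) := by noncomm_ring
      _ = x * x * u - u * (star y * y) - (x + star x) * (star v * y) := by
        rw [(hy u).eq, (hx _).symm.eq]
      _ = x * (x * u - star v * y) - star (v * x + y * star u) * y := by
        simp only [star_add, star_mul, star_star]; noncomm_ring
  · calc v * (x * x - star y * y) + (y * x + y * star x) * star u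
        = v * x * x - v * (star y * y) + y * ((x + star x) * star u) := by noncomm_ring
      _ = v * x * x - (y * star y) * v + y * (star u * (x + star x)) := by
        rw [← (hy v).eq, (hx _).eq, star_comm_self' y]
      _ = (v * x + y * star u) * x + y * star (x * u - star v * y) := by
        simp only [star_sub, star_mul, star_star]; noncomm_ring

theorem assoc_add_assoc_swap (a b m : Octonion) : assoc a b m + assoc b a m = 0 := by
  have h := mul_self_mul (a + b) m
  simp only [Octonion.mul_add, Octonion.add_mul, mul_self_mul a, mul_self_mul b] at h
  rw [assoc, assoc, ← sub_eq_zero.mpr h]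
  abel

end Octonion

/-- The conjugate action `p ⋆ m = p̄·m` makes `𝕆` into a left `𝕆`-module:
`1 ⋆ m = m` and the alternating rule holds. -/
theorem conj_module_is_leftOModule :
    (∀ m : Octonion, star (1 : Octonion) * m = m) ∧
    (∀ p q m : Octonion,
      star (p * q) * m - star p * (star q * m) =
        -(star (q * p) * m - star q * (star p * m))) := by
  refine ⟨fun m => by rw [Octonion.star_one, Octonion.one_mul], fun p q m => ?_⟩
  rw [Octonion.star_mul, Octonion.star_mul, ← sub_eq_zero,
    ← Octonion.assoc_add_assoc_swap (star q) (star p) m, Octonion.assoc, Octonion.assoc]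
  abel
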